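/- The normalized intertwiner between π₁₂₁ and π₂₁₂ is unique: assume κ₁ = σ₁, κ₁ = κ₂ = σ₂ and α₁β₁ = α₂β₂. If Φ and Φ' are two bijective ℚ(q)-linear maps F⊗F⊗F → F⊗F⊗F, both satisfying Φ(|0⟩⊗|0⟩⊗|0⟩) = |0⟩⊗|0⟩⊗|0⟩ (respectively for Φ') and, for all 1 ≤ I,J ≤ 7, (Σ_{K,L=1}^{7} π₂(t_{IK})⊗π₁(t_{KL})⊗π₂(t_{LJ})) ∘ Φ = Φ ∘ (Σ_{K,L=1}^{7} π₁(t_{IK})⊗π₂(t_{KL})⊗π₁(t_{LJ})) (respectively for Φ'), then Φ = Φ'. -/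
import Mathlib


open TensorProduct

noncomputable section

abbrev Fq : Type := RatFunc ℚ

def q : Fq := RatFunc.X

abbrev F : Type := ℕ →₀ Fq

def ket (m : ℕ) : F := Finsupp.single m 1

/-- Linear operator on the Fock space from its action on the basis. -/
def opOf (v : ℕ → F) : F →ₗ[Fq] F := Finsupp.lift F Fq ℕ v

/-- q²-oscillator K -/
def K2 : F →ₗ[Fq] F := opOf fun m => q ^ (2 * m) • ket m
/-- q²-oscillator A⁺ -/
def Ap : F →ₗ[Fq] F := opOf fun m => ket (m + 1)
/-- q²-oscillator A⁻ -/
def Am : F →ₗ[Fq] F := opOf fun m => (1 - q ^ (4 * m)) • ket (m - 1)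
/-- q-oscillator k -/
def kk : F →ₗ[Fq] F := opOf fun m => q ^ m • ket m
/-- q-oscillator a⁺ -/
def ap : F →ₗ[Fq] F := opOf fun m => ket (m + 1)
/-- q-oscillator a⁻ -/
def am : F →ₗ[Fq] F := opOf fun m => (1 - q ^ (2 * m)) • ket (m - 1)

def pi1 (α β μ ν κ σ : Fq) : Matrix (Fin 7) (Fin 7) (F →ₗ[Fq] F) :=
  !![μ • Am, α • K2, 0, 0, 0, 0, 0;
     β • K2, ν • Ap, 0, 0, 0, 0, 0;
     0, 0, κ • LinearMap.id, 0, 0, 0, 0;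
     0, 0, 0, σ • LinearMap.id, 0, 0, 0;
     0, 0, 0, 0, κ⁻¹ • LinearMap.id, 0, 0;
     0, 0, 0, 0, 0, ν⁻¹ • Am, (q ^ 2 * β⁻¹) • K2;
     0, 0, 0, 0, 0, (q ^ 2 * α⁻¹) • K2, μ⁻¹ • Ap]

def pi2 (α β μ ν κ σ : Fq) : Matrix (Fin 7) (Fin 7) (F →ₗ[Fq] F) :=
  !![κ • LinearMap.id, 0, 0, 0, 0, 0, 0;
     0, μ • Am, α • K2, 0, 0, 0, 0;
     0, β • K2, ν • Ap, 0, 0, 0, 0;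
     0, 0, 0, σ • LinearMap.id, 0, 0, 0;
     0, 0, 0, 0, ν⁻¹ • Am, (q ^ 2 * β⁻¹) • K2, 0;
     0, 0, 0, 0, (q ^ 2 * α⁻¹) • K2, μ⁻¹ • Ap, 0;
     0, 0, 0, 0, 0, 0, κ⁻¹ • LinearMap.id]

def pi3 (α μ κa κb : Fq) : Matrix (Fin 7) (Fin 7) (F →ₗ[Fq] F) :=
  !![κa • LinearMap.id, 0, 0, 0, 0, 0, 0;
     0, κb • LinearMap.id, 0, 0, 0, 0, 0;
     0, 0, μ • (am ∘ₗ am), α • (kk ∘ₗ am), (-((1 + q ^ 2) * μ)⁻¹ * α ^ 2) • (kk ∘ₗ kk), 0, 0;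
     0, 0, (-(1 + q ^ 2) * α⁻¹ * μ) • (am ∘ₗ kk), am ∘ₗ ap - kk ∘ₗ kk, (-(q * μ)⁻¹ * α) • (kk ∘ₗ ap), 0, 0;
     0, 0, (-(1 + q ^ 2) * q ^ 2 * α⁻¹ ^ 2 * μ) • (kk ∘ₗ kk), ((1 + q ^ 2) * α⁻¹) • (kk ∘ₗ ap), μ⁻¹ • (ap ∘ₗ ap), 0, 0;
     0, 0, 0, 0, 0, κb⁻¹ • LinearMap.id, 0;
     0, 0, 0, 0, 0, 0, κa⁻¹ • LinearMap.id]

def rhoB : Fin 7 → ℤ := ![5, 3, 1, 0, -1, -3, -5]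

def CB : Matrix (Fin 7) (Fin 7) Fq := fun i j => if (i : ℕ) + (j : ℕ) = 6 then q ^ rhoB j else 0


set_option synthInstance.maxHeartbeats 1000000
set_option maxHeartbeats 2000000

lemma opOf_ket (v : ℕ → F) (m : ℕ) : opOf v (ket m) = v m := by
  simp [opOf, ket]

lemma K2_ket (m : ℕ) : K2 (ket m) = q ^ (2 * m) • ket m := opOf_ket _ m
lemma Ap_ket (m : ℕ) : Ap (ket m) = ket (m + 1) := opOf_ket _ m

lemma smulA (s : Fq) (x y z : F) : (s • x) ⊗ₜ[Fq] (y ⊗ₜ[Fq] z) = s • (x ⊗ₜ[Fq] (y ⊗ₜ[Fq] z)) := by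
  rw [smul_tmul']
lemma smulB (s : Fq) (x y z : F) : x ⊗ₜ[Fq] ((s • y) ⊗ₜ[Fq] z) = s • (x ⊗ₜ[Fq] (y ⊗ₜ[Fq] z)) := by
  rw [← tmul_smul, smul_tmul']
lemma smulC (s : Fq) (x y z : F) : x ⊗ₜ[Fq] (y ⊗ₜ[Fq] (s • z)) = s • (x ⊗ₜ[Fq] (y ⊗ₜ[Fq] z)) := by
  rw [← tmul_smul, ← tmul_smul]

lemma q_ne_zero : q ≠ 0 := RatFunc.X_ne_zero

/-- the normalized intertwiner between π₁₂₁ and π₂₁₂ is unique. -/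
theorem intertwiner_121_212_unique
    (α₁ β₁ μ₁ ν₁ κ₁ σ₁ : Fq) (hα₁ : α₁ ≠ 0) (hβ₁ : β₁ ≠ 0) (hμ₁ : μ₁ ≠ 0) (hν₁ : ν₁ ≠ 0)
    (hκ₁ : κ₁ ≠ 0) (hσ₁0 : σ₁ ≠ 0)
    (hrel₁ : α₁ * β₁ = -q ^ 2 * (μ₁ * ν₁)) (hσ₁ : σ₁ = 1 ∨ σ₁ = -1)
    (α₂ β₂ μ₂ ν₂ κ₂ σ₂ : Fq) (hα₂ : α₂ ≠ 0) (hβ₂ : β₂ ≠ 0) (hμ₂ : μ₂ ≠ 0) (hν₂ : ν₂ ≠ 0)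
    (hκ₂ : κ₂ ≠ 0) (hσ₂0 : σ₂ ≠ 0)
    (hrel₂ : α₂ * β₂ = -q ^ 2 * (μ₂ * ν₂)) (hσ₂ : σ₂ = 1 ∨ σ₂ = -1)
    (par1 : κ₁ = σ₁) (par2a : κ₁ = κ₂) (par2b : κ₂ = σ₂) (par2c : α₁ * β₁ = α₂ * β₂)
    (Φ Φ' : F ⊗[Fq] (F ⊗[Fq] F) →ₗ[Fq] F ⊗[Fq] (F ⊗[Fq] F))
    (hΦbij : Function.Bijective Φ) (hΦ'bij : Function.Bijective Φ')
    (hΦ0 : Φ (ket 0 ⊗ₜ[Fq] (ket 0 ⊗ₜ[Fq] ket 0)) = ket 0 ⊗ₜ[Fq] (ket 0 ⊗ₜ[Fq] ket 0))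
    (hΦ'0 : Φ' (ket 0 ⊗ₜ[Fq] (ket 0 ⊗ₜ[Fq] ket 0)) = ket 0 ⊗ₜ[Fq] (ket 0 ⊗ₜ[Fq] ket 0))
    (hΦ : ∀ I J : Fin 7,
      (∑ K : Fin 7, ∑ L : Fin 7,
          TensorProduct.map (pi2 α₂ β₂ μ₂ ν₂ κ₂ σ₂ I K)
            (TensorProduct.map (pi1 α₁ β₁ μ₁ ν₁ κ₁ σ₁ K L) (pi2 α₂ β₂ μ₂ ν₂ κ₂ σ₂ L J))) ∘ₗ Φ
        = Φ ∘ₗ (∑ K : Fin 7, ∑ L : Fin 7,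
            TensorProduct.map (pi1 α₁ β₁ μ₁ ν₁ κ₁ σ₁ I K)
              (TensorProduct.map (pi2 α₂ β₂ μ₂ ν₂ κ₂ σ₂ K L) (pi1 α₁ β₁ μ₁ ν₁ κ₁ σ₁ L J))))
    (hΦ' : ∀ I J : Fin 7,
      (∑ K : Fin 7, ∑ L : Fin 7,
          TensorProduct.map (pi2 α₂ β₂ μ₂ ν₂ κ₂ σ₂ I K)
            (TensorProduct.map (pi1 α₁ β₁ μ₁ ν₁ κ₁ σ₁ K L) (pi2 α₂ β₂ μ₂ ν₂ κ₂ σ₂ L J))) ∘ₗ Φ'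
        = Φ' ∘ₗ (∑ K : Fin 7, ∑ L : Fin 7,
            TensorProduct.map (pi1 α₁ β₁ μ₁ ν₁ κ₁ σ₁ I K)
              (TensorProduct.map (pi2 α₂ β₂ μ₂ ν₂ κ₂ σ₂ K L) (pi1 α₁ β₁ μ₁ ν₁ κ₁ σ₁ L J)))) :
    Φ = Φ' := by
  classical
  have q_ne : q ≠ 0 := q_ne_zero
  -- a generic step: if the "121" side operator sends x to a nonzero multiple of y,
  -- then agreement of Φ and Φ' at x propagates to y
  have step : ∀ (I J : Fin 7) (x y : F ⊗[Fq] (F ⊗[Fq] F)) (s : Fq), s ≠ 0 →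
      (∑ K : Fin 7, ∑ L : Fin 7,
          TensorProduct.map (pi1 α₁ β₁ μ₁ ν₁ κ₁ σ₁ I K)
            (TensorProduct.map (pi2 α₂ β₂ μ₂ ν₂ κ₂ σ₂ K L) (pi1 α₁ β₁ μ₁ ν₁ κ₁ σ₁ L J))) x
        = s • y →
      Φ x = Φ' x → Φ y = Φ' y := by
    intro I J x y s hs hR hxy
    have h1 := congrArg (fun f => f x) (hΦ I J)
    have h2 := congrArg (fun f => f x) (hΦ' I J)
    simp only [LinearMap.comp_apply] at h1 h2
    have h3 : Φ (s • y) = Φ' (s • y) := by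
      rw [← hR, ← h1, ← h2, hxy]
    have e1 : Φ y = s⁻¹ • Φ (s • y) := by
      rw [map_smul, smul_smul, inv_mul_cancel₀ hs, one_smul]
    have e2 : Φ' y = s⁻¹ • Φ' (s • y) := by
      rw [map_smul, smul_smul, inv_mul_cancel₀ hs, one_smul]
    rw [e1, e2, h3]
  -- evaluation of the three chosen relations on basis vectors
  have hX : ∀ a b c : ℕ,
      (∑ K : Fin 7, ∑ L : Fin 7,
          TensorProduct.map (pi1 α₁ β₁ μ₁ ν₁ κ₁ σ₁ 1 K)
            (TensorProduct.map (pi2 α₂ β₂ μ₂ ν₂ κ₂ σ₂ K L) (pi1 α₁ β₁ μ₁ ν₁ κ₁ σ₁ L 2)))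
        (ket a ⊗ₜ[Fq] (ket b ⊗ₜ[Fq] ket c))
      = (ν₁ * (α₂ * q ^ (2 * b)) * κ₁) • (ket (a + 1) ⊗ₜ[Fq] (ket b ⊗ₜ[Fq] ket c)) := by
    intro a b c
    simp [Fin.sum_univ_succ, pi1, pi2, K2_ket, Ap_ket, smulA, smulB, smulC,
      LinearMap.sum_apply, map_tmul, smul_smul, mul_comm, mul_left_comm]
  have hY : ∀ a b c : ℕ,
      (∑ K : Fin 7, ∑ L : Fin 7,
          TensorProduct.map (pi1 α₁ β₁ μ₁ ν₁ κ₁ σ₁ 2 K)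
            (TensorProduct.map (pi2 α₂ β₂ μ₂ ν₂ κ₂ σ₂ K L) (pi1 α₁ β₁ μ₁ ν₁ κ₁ σ₁ L 1)))
        (ket a ⊗ₜ[Fq] (ket b ⊗ₜ[Fq] ket c))
      = (κ₁ * (β₂ * q ^ (2 * b)) * ν₁) • (ket a ⊗ₜ[Fq] (ket b ⊗ₜ[Fq] ket (c + 1))) := by
    intro a b c
    simp [Fin.sum_univ_succ, pi1, pi2, K2_ket, Ap_ket, smulA, smulB, smulC,
      LinearMap.sum_apply, map_tmul, smul_smul, mul_comm, mul_left_comm]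
  have hZ : ∀ a b c : ℕ,
      (∑ K : Fin 7, ∑ L : Fin 7,
          TensorProduct.map (pi1 α₁ β₁ μ₁ ν₁ κ₁ σ₁ 2 K)
            (TensorProduct.map (pi2 α₂ β₂ μ₂ ν₂ κ₂ σ₂ K L) (pi1 α₁ β₁ μ₁ ν₁ κ₁ σ₁ L 2)))
        (ket a ⊗ₜ[Fq] (ket b ⊗ₜ[Fq] ket c))
      = (κ₁ * ν₂ * κ₁) • (ket a ⊗ₜ[Fq] (ket (b + 1) ⊗ₜ[Fq] ket c)) := by
    intro a b c
    simp [Fin.sum_univ_succ, pi1, pi2, K2_ket, Ap_ket, smulA, smulB, smulC,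
      LinearMap.sum_apply, map_tmul, smul_smul, mul_comm, mul_left_comm]
  have main : ∀ a b c : ℕ,
      Φ (ket a ⊗ₜ[Fq] (ket b ⊗ₜ[Fq] ket c)) = Φ' (ket a ⊗ₜ[Fq] (ket b ⊗ₜ[Fq] ket c)) := by
    intro a b c
    induction a with
    | zero =>
      induction c with
      | zero =>
        induction b with
        | zero => rw [hΦ0, hΦ'0]
        | succ b ih =>
          exact step 2 2 _ _ _ (mul_ne_zero (mul_ne_zero hκ₁ hν₂) hκ₁) (hZ 0 b 0) ih
      | succ c ih =>
        exact step 2 1 _ _ _ (mul_ne_zero (mul_ne_zero hκ₁ (mul_ne_zero hβ₂ (pow_ne_zero _ q_ne))) hν₁) (hY 0 b c) ih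
    | succ a ih =>
      exact step 1 2 _ _ _ (mul_ne_zero (mul_ne_zero hν₁ (mul_ne_zero hα₂ (pow_ne_zero _ q_ne))) hκ₁) (hX a b c) ih
  refine Module.Basis.ext
    ((Finsupp.basisSingleOne).tensorProduct
      ((Finsupp.basisSingleOne).tensorProduct Finsupp.basisSingleOne)) ?_
  rintro ⟨a, b, c⟩
  simpa [Module.Basis.tensorProduct_apply, ket] using main a b c
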